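/- arXiv:1808.09659 — 2 statements merged into one kernel-verified Lean document; each statement's English description precedes it below -/
import Mathlib

section
/- Let 1 < p < 2 with 1/p + 1/p′ = 1, and let z ∈ ℂ. Then φ_z ∈ L^{p′}(𝔛), i.e. ∑_{x∈𝔛} |φ_z(x)|^{p′} < ∞, if and only if z lies in the interior S_p° of the strip S_p, i.e. if and only if |Im z| < 1/p − 1/2. -/
open Complex MeasureTheory ENNReal Filter

noncomputable section

/-- A homogeneous tree of degree `q + 1`: a connected acyclic graph in which every
vertex has exactly `q + 1` neighbours, together with a fixed reference vertex `o`. -/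
structure HomTree (q : ℕ) where
  X : Type
  G : SimpleGraph X
  connected : G.Connected
  acyclic : G.IsAcyclic
  regular : ∀ x : X, (G.neighborSet x).ncard = q + 1
  o : X

namespace HomTree

/-- `τ = 2π / log q`. -/
def tau (q : ℕ) : ℝ := 2 * Real.pi / Real.log q

/-- The meromorphic `c`-function. -/
def cfun (q : ℕ) (z : ℂ) : ℂ :=
  ((q : ℂ) ^ ((1 : ℂ) / 2) / ((q : ℂ) + 1)) *
    (((q : ℂ) ^ ((1 : ℂ) / 2 + I * z) - (q : ℂ) ^ (-(1 : ℂ) / 2 - I * z)) /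
      ((q : ℂ) ^ (I * z) - (q : ℂ) ^ (-(I * z))))

/-- The coefficients `B′(n,m,s)`. -/
def Bp (q : ℕ) (s : ℝ) (n m : ℕ) : ℂ :=
  if n = 0 then
    (q : ℂ) ^ (-(I * (s : ℂ) * (m : ℂ))) +
      cfun q (s : ℂ) * ((q : ℂ) ^ (I * (s : ℂ) * (m : ℂ)) - (q : ℂ) ^ (-(I * (s : ℂ) * (m : ℂ))))
  else
    cfun q (s : ℂ) * (q : ℂ) ^ (I * (s : ℂ) * ((n : ℂ) - 1)) *
      ((q : ℂ) ^ (I * (s : ℂ) * ((m : ℂ) - (n : ℂ) + 1)) -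
        (q : ℂ) ^ (-(I * (s : ℂ) * ((m : ℂ) - (n : ℂ) + 1))))

variable {q : ℕ} (T : HomTree q)

/-- Counting measurable structure on the vertices. -/
instance : MeasurableSpace T.X := ⊤

/-- `|x| = d(o, x)`. -/
def nrm (x : T.X) : ℕ := T.G.dist T.o x

open Classical in
/-- The elementary spherical function `φ_z`. -/
def sph (z : ℂ) (x : T.X) : ℂ :=
  if ∃ k : ℤ, z = (k : ℂ) * (tau q : ℂ) then
    ((((q : ℂ) - 1) / ((q : ℂ) + 1)) * (T.nrm x : ℂ) + 1) * (q : ℂ) ^ (-(T.nrm x : ℂ) / 2)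
  else if ∃ k : ℤ, z = (tau q : ℂ) / 2 + (k : ℂ) * (tau q : ℂ) then
    (-1) ^ (T.nrm x) * ((((q : ℂ) - 1) / ((q : ℂ) + 1)) * (T.nrm x : ℂ) + 1) *
      (q : ℂ) ^ (-(T.nrm x : ℂ) / 2)
  else
    cfun q z * (q : ℂ) ^ ((I * z - 1 / 2) * (T.nrm x : ℂ)) +
      cfun q (-z) * (q : ℂ) ^ ((-(I * z) - 1 / 2) * (T.nrm x : ℂ))

/-- A function on the tree is radial if it depends only on `|x|`. -/
def Radial (f : T.X → ℂ) : Prop := ∀ x y : T.X, T.nrm x = T.nrm y → f x = f y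

/-- The weak `L^r` quasinorm `sup_{t>0} t · μ(|u| > t)^{1/r}` (w.r.t. the counting
measure when the underlying measurable space carries `Measure.count`). -/
def weakN {Y : Type} [MeasurableSpace Y] (r : ℝ) (u : Y → ℂ) : ℝ≥0∞ :=
  ⨆ t : ℝ, ENNReal.ofReal t * (Measure.count {y | t < ‖u y‖}) ^ (1 / r)

/-- The Lorentz `L^{r,1}` norm `(1/r)∫₀^∞ u*(t) t^{1/r-1} dt`, written in the equivalent
layer-cake form `∫₀^∞ μ(|u| > s)^{1/r} ds`. -/
def lorN1 {Y : Type} [MeasurableSpace Y] (r : ℝ) (u : Y → ℂ) : ℝ≥0∞ :=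
  ∫⁻ s in Set.Ioi (0 : ℝ), (Measure.count {y | s < ‖u y‖}) ^ (1 / r)

/-- The boundary `Ω`: infinite geodesic rays starting at `o`. -/
structure Boundary where
  seq : ℕ → T.X
  start : seq 0 = T.o
  adj : ∀ n, T.G.Adj (seq n) (seq (n + 1))
  dist_eq : ∀ n, T.G.dist T.o (seq n) = n

/-- The basic boundary set `E(x) = {ω : ω_{|x|} = x}`. -/
def E (x : T.X) : Set T.Boundary := {ω | ω.seq (T.nrm x) = x}

/-- The σ-algebra on `Ω` generated by the sets `E(x)`. -/
instance : MeasurableSpace T.Boundary :=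
  MeasurableSpace.generateFrom {S | ∃ x : T.X, S = T.E x}

/-- `|c(x,ω)|`: the distance from `o` of the last vertex on the geodesic from `o` to `x`
lying on the ray `ω`. -/
def confl (ω : T.Boundary) (x : T.X) : ℕ :=
  Nat.findGreatest (fun n => n + T.G.dist (ω.seq n) x = T.nrm x) (T.nrm x)

/-- The Poisson kernel `p(x,ω) = q^{h_ω(x)} = q^{2|c(x,ω)| - |x|}`. -/
def pker (ω : T.Boundary) (x : T.X) : ℝ :=
  (q : ℝ) ^ ((2 * (T.confl ω x) : ℤ) - (T.nrm x : ℤ))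

/-- The Poisson transform `P_z F(x) = ∫_Ω p(x,ω)^{1/2+iz} F(ω) dν(ω)`. -/
def ptrans (ν : Measure T.Boundary) (z : ℂ) (F : T.Boundary → ℂ) (x : T.X) : ℂ :=
  ∫ ω, ((T.pker ω x : ℂ) ^ ((1 : ℂ) / 2 + I * z)) * F ω ∂ν

/-- The Laplacian `ℒu(x) = (q+1)⁻¹ ∑_{y ∼ x} u(y)`. -/
def lap (u : T.X → ℂ) (x : T.X) : ℂ :=
  (1 / ((q : ℂ) + 1)) * ∑' y : T.G.neighborSet x, u y

/-- `γ(z) = (q^{1/2+iz} + q^{1/2-iz})/(q+1)`. -/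
def gam (q : ℕ) (z : ℂ) : ℂ :=
  ((q : ℂ) ^ ((1 : ℂ) / 2 + I * z) + (q : ℂ) ^ ((1 : ℂ) / 2 - I * z)) / ((q : ℂ) + 1)

/-- The conditional expectation `ℰ_n F(ω) = ν(E(ω_n))⁻¹ ∫_{E(ω_n)} F dν` (real valued). -/
def condE (ν : Measure T.Boundary) (F : T.Boundary → ℝ) (n : ℕ) (ω : T.Boundary) : ℝ :=
  (ν {ω' : T.Boundary | ω'.seq n = ω.seq n}).toReal⁻¹ *
    ∫ ω' in {ω' : T.Boundary | ω'.seq n = ω.seq n}, F ω' ∂ν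

/-- The conditional expectation (complex valued). -/
def condEC (ν : Measure T.Boundary) (F : T.Boundary → ℂ) (n : ℕ) (ω : T.Boundary) : ℂ :=
  (((ν {ω' : T.Boundary | ω'.seq n = ω.seq n}).toReal⁻¹ : ℝ) : ℂ) *
    ∫ ω' in {ω' : T.Boundary | ω'.seq n = ω.seq n}, F ω' ∂ν

/-- The martingale maximal function `ℰF(ω) = sup_n |ℰ_n F(ω)|`, valued in `[0,∞]`. -/
def maximal (ν : Measure T.Boundary) (F : T.Boundary → ℝ) (ω : T.Boundary) : ℝ≥0∞ :=
  ⨆ n : ℕ, ENNReal.ofReal |T.condE ν F n ω|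

/-- The martingale difference `Δ_n F = ℰ_n F - ℰ_{n-1} F`, with `ℰ_{-1} = 0`. -/
def deltaC (ν : Measure T.Boundary) (F : T.Boundary → ℂ) (n : ℕ) (ω : T.Boundary) : ℂ :=
  T.condEC ν F n ω - if n = 0 then 0 else T.condEC ν F (n - 1) ω

/-- `y` and `x` have the same `n`-th vertex on their geodesics from `o`. -/
def sameAt (n : ℕ) (x y : T.X) : Prop :=
  ∃ v : T.X, T.nrm v = n ∧ T.nrm v + T.G.dist v x = T.nrm x ∧ T.nrm v + T.G.dist v y = T.nrm y

/-- `S(n,x)`: `{x}` if `|x| ≤ n`, and `{y : |y| = |x|, y_n = x_n}` otherwise. -/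
def sphereSet (n : ℕ) (x : T.X) : Set T.X :=
  if T.nrm x ≤ n then {x} else {y | T.nrm y = T.nrm x ∧ T.sameAt n x y}

open Classical in
/-- `ε_n u(x) = (#S(n,x))⁻¹ ∑_{y ∈ S(n,x)} u(y)`. -/
def epsOp (n : ℕ) (u : T.X → ℂ) (x : T.X) : ℂ :=
  (((T.sphereSet n x).ncard : ℂ))⁻¹ * ∑' y : T.sphereSet n x, u y

/-- The ball `B(x,r)`. -/
def ball (x : T.X) (r : ℕ) : Set T.X := {y | T.G.dist x y ≤ r}

/-- `ℳu(x) = sup_{r ≥ 1} (#B(x,r))^{-1/2} ∑_{y ∈ B(x,r)} |u(y)|`, valued in `[0,∞]`. -/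
def maxOp (u : T.X → ℂ) (x : T.X) : ℝ≥0∞ :=
  ⨆ r : ℕ+, (Measure.count (T.ball x (r : ℕ))) ^ (-(1 : ℝ) / 2) *
    ∑' y : T.ball x (r : ℕ), ENNReal.ofReal ‖u y‖

/-- The Helgason–Fourier transform `f̃(z,ω) = ∑_x f(x) p(x,ω)^{1/2+iz}`. -/
def hft (f : T.X → ℂ) (z : ℂ) (ω : T.Boundary) : ℂ :=
  ∑' x : T.X, f x * ((T.pker ω x : ℂ) ^ ((1 : ℂ) / 2 + I * z))

end HomTree

namespace HomTree

/-- the complex absolute value, as the norm -/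
def cabs : AbsoluteValue ℂ ℝ := IsAbsoluteValue.toAbsoluteValue (norm : ℂ → ℝ)

lemma cabs_apply (z : ℂ) : cabs z = ‖z‖ := rfl

lemma cabs_ofReal (r : ℝ) : cabs (r : ℂ) = |r| := by
  rw [cabs_apply, Complex.norm_real, Real.norm_eq_abs]

section TreeCombinatorics

variable {q : ℕ} (T : HomTree q)

lemma path_length {u v : T.X} (p : T.G.Walk u v) (hp : p.IsPath) :
    p.length = T.G.dist u v := by
  obtain ⟨p₀, hp₀, hl⟩ := T.connected.exists_path_of_dist u v
  have h := SimpleGraph.isAcyclic_iff_path_unique.mp T.acyclic ⟨p, hp⟩ ⟨p₀, hp₀⟩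
  rw [← hl]
  exact congrArg SimpleGraph.Walk.length (congrArg Subtype.val h)

lemma nrm_ne_of_adj {x y : T.X} (h : T.G.Adj x y) : T.nrm x ≠ T.nrm y := by
  classical
  intro he
  obtain ⟨p, hp, hl⟩ := T.connected.exists_path_of_dist T.o x
  by_cases hy : y ∈ p.support
  · have ht : (p.takeUntil y hy).IsPath := hp.takeUntil hy
    have h1 : (p.takeUntil y hy).length = T.nrm y := T.path_length _ ht
    have h2 : (p.takeUntil y hy).length + (p.dropUntil y hy).length = p.length := by
      rw [← SimpleGraph.Walk.length_append, SimpleGraph.Walk.take_spec]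
    have h3 : (p.dropUntil y hy).length = 0 := by
      have h4 : p.length = T.nrm x := hl
      unfold HomTree.nrm at *
      omega
    have h4 := SimpleGraph.Walk.eq_of_length_eq_zero h3
    exact h.ne h4.symm
  · have hcp : (p.concat h).IsPath := by
      rw [SimpleGraph.Walk.isPath_def, SimpleGraph.Walk.support_concat,
        List.nodup_append]
      refine ⟨hp.support_nodup, List.nodup_singleton _, fun a ha b hb hab => ?_⟩
      subst hab
      simp only [List.mem_singleton] at hb
      exact hy (hb ▸ ha)
    have h5 := T.path_length _ hcp
    rw [SimpleGraph.Walk.length_concat] at h5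
    have h6 : p.length = T.nrm x := hl
    unfold HomTree.nrm at *
    omega

lemma nrm_adj {x y : T.X} (h : T.G.Adj x y) :
    T.nrm y = T.nrm x + 1 ∨ T.nrm x = T.nrm y + 1 := by
  have hd : T.G.dist x y = 1 := SimpleGraph.dist_eq_one_iff_adj.mpr h
  have h1 : T.G.dist T.o y ≤ T.G.dist T.o x + 1 := by
    have := T.connected.dist_triangle (u := T.o) (v := x) (w := y)
    omega
  have h2 : T.G.dist T.o x ≤ T.G.dist T.o y + 1 := by
    have := T.connected.dist_triangle (u := T.o) (v := y) (w := x)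
    have hd' : T.G.dist y x = 1 := by rwa [SimpleGraph.dist_comm]
    omega
  have h3 := T.nrm_ne_of_adj h
  unfold HomTree.nrm at *
  omega

lemma mem_support_dist {x y : T.X} {p : T.G.Walk T.o x} (hp : p.IsPath)
    (hy : y ∈ p.support) : T.nrm y ≤ T.nrm x ∧ (T.nrm y = T.nrm x → y = x) := by
  classical
  have ht : (p.takeUntil y hy).IsPath := hp.takeUntil hy
  have h1 : (p.takeUntil y hy).length = T.nrm y := T.path_length _ ht
  have h2 : (p.takeUntil y hy).length + (p.dropUntil y hy).length = p.length := by
    rw [← SimpleGraph.Walk.length_append, SimpleGraph.Walk.take_spec]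
  have h3 : p.length = T.nrm x := T.path_length _ hp
  constructor
  · omega
  · intro he
    have h0 : (p.dropUntil y hy).length = 0 := by omega
    exact SimpleGraph.Walk.eq_of_length_eq_zero h0

lemma exists_parent {x : T.X} {n : ℕ} (hx : T.nrm x = n + 1) :
    ∃ y, T.G.Adj x y ∧ T.nrm y = n := by
  obtain ⟨p, hp, hl⟩ := T.connected.exists_path_of_dist T.o x
  have hpr : p.reverse.IsPath := hp.reverse
  have hlen : p.reverse.length = n + 1 := by
    rw [SimpleGraph.Walk.length_reverse, hl]; exact hx
  obtain ⟨y, h, w, hcons⟩ := SimpleGraph.Walk.not_nil_iff.mp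
    (by rw [SimpleGraph.Walk.not_nil_iff_lt_length, hlen]; omega)
  refine ⟨y, h, ?_⟩
  rw [hcons] at hpr hlen
  have hw : w.IsPath := hpr.of_cons
  have hwr : w.reverse.IsPath := hw.reverse
  have h6 := T.path_length _ hwr
  rw [SimpleGraph.Walk.length_reverse] at h6
  rw [SimpleGraph.Walk.length_cons] at hlen
  unfold HomTree.nrm
  omega

lemma parent_unique {x y₁ y₂ : T.X} {n : ℕ} (hx : T.nrm x = n + 1)
    (h1 : T.G.Adj x y₁) (hn1 : T.nrm y₁ = n) (h2 : T.G.Adj x y₂) (hn2 : T.nrm y₂ = n) :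
    y₁ = y₂ := by
  classical
  by_contra hne
  obtain ⟨p, hp, hl⟩ := T.connected.exists_path_of_dist T.o y₁
  have hplen : p.length = n := by rw [hl]; exact hn1
  have hxs : x ∉ p.support := by
    intro hxp
    have := (T.mem_support_dist hp hxp).1
    omega
  have hy2 : y₂ ∉ p.support := by
    intro hyp
    have := (T.mem_support_dist hp hyp).2 (by omega)
    exact hne this.symm
  have hcp : ((p.concat h1.symm).concat h2).IsPath := by
    rw [SimpleGraph.Walk.isPath_def, SimpleGraph.Walk.support_concat,
      SimpleGraph.Walk.support_concat,
      List.append_assoc, List.nodup_append]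
    refine ⟨hp.support_nodup, ?_, fun a ha b hb hab => ?_⟩
    · simp only [List.singleton_append, List.nodup_cons, List.mem_singleton,
        List.not_mem_nil, not_false_iff, List.nodup_nil, and_true, true_and]
      exact h2.ne
    · subst hab
      simp only [List.singleton_append, List.mem_cons, List.mem_singleton,
        List.not_mem_nil, or_false] at hb
      rcases hb with rfl | rfl
      · exact hxs ha
      · exact hy2 ha
  have h5 := T.path_length _ hcp
  rw [SimpleGraph.Walk.length_concat, SimpleGraph.Walk.length_concat] at h5
  unfold HomTree.nrm at *
  omega

/-- the set of children of a vertex -/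
def children (x : T.X) : Set T.X := {y | T.G.Adj x y ∧ T.nrm y = T.nrm x + 1}

lemma nbr_finite (hq : 2 ≤ q) (x : T.X) : (T.G.neighborSet x).Finite := by
  by_contra h
  have h2 := Set.Infinite.ncard h
  rw [T.regular x] at h2
  omega

lemma children_finite (hq : 2 ≤ q) (x : T.X) : (T.children x).Finite := by
  apply (T.nbr_finite hq x).subset
  intro y hy
  exact hy.1

lemma ncard_children (hq : 2 ≤ q) (x : T.X) :
    (T.children x).ncard = if T.nrm x = 0 then q + 1 else q := by
  have hnf := T.nbr_finite hq x
  by_cases h0 : T.nrm x = 0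
  · rw [if_pos h0]
    have h : T.children x = T.G.neighborSet x := by
      ext y
      simp only [children, SimpleGraph.mem_neighborSet, Set.mem_setOf_eq, and_iff_left_iff_imp]
      intro hy
      rcases T.nrm_adj hy with h | h
      · exact h
      · omega
    rw [h, T.regular x]
  · rw [if_neg h0]
    obtain ⟨m, hm⟩ : ∃ m, T.nrm x = m + 1 := ⟨T.nrm x - 1, by omega⟩
    obtain ⟨y₀, hy₀a, hy₀n⟩ := T.exists_parent hm
    have hsplit : T.G.neighborSet x = T.children x ∪ {y₀} := by
      ext y
      simp only [children, SimpleGraph.mem_neighborSet, Set.mem_union, Set.mem_setOf_eq,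
        Set.mem_singleton_iff]
      constructor
      · intro hy
        rcases T.nrm_adj hy with h | h
        · exact Or.inl ⟨hy, h⟩
        · exact Or.inr (T.parent_unique hm hy (by omega) hy₀a hy₀n)
      · rintro (⟨hy, _⟩ | rfl)
        · exact hy
        · exact hy₀a
    have hdisj : Disjoint (T.children x) ({y₀} : Set T.X) := by
      rw [Set.disjoint_singleton_right]
      intro hy
      have := hy.2
      omega
    have hcf := T.children_finite hq x
    have hr := T.regular x
    rw [hsplit, Set.ncard_union_eq hdisj hcf (Set.finite_singleton y₀),
      Set.ncard_singleton] at hr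
    omega

/-- the sphere of radius `n` -/
def sphSet (n : ℕ) : Set T.X := {x | T.nrm x = n}

lemma sphSet_zero : T.sphSet 0 = {T.o} := by
  ext x
  simp only [sphSet, Set.mem_setOf_eq, Set.mem_singleton_iff, HomTree.nrm]
  constructor
  · intro h
    exact (T.connected.dist_eq_zero_iff.mp h).symm
  · rintro rfl
    exact SimpleGraph.dist_self

lemma sphSet_succ (n : ℕ) : T.sphSet (n + 1) = ⋃ x ∈ T.sphSet n, T.children x := by
  ext y
  simp only [sphSet, Set.mem_setOf_eq, Set.mem_iUnion, children]
  constructor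
  · intro hy
    obtain ⟨x, hxa, hxn⟩ := T.exists_parent hy
    exact ⟨x, hxn, hxa.symm, by omega⟩
  · rintro ⟨x, hxn, hxa, hyn⟩
    omega

lemma sphSet_card (hq : 2 ≤ q) : ∀ n : ℕ, (T.sphSet (n + 1)).Finite ∧
    (T.sphSet (n + 1)).ncard = (q + 1) * q ^ n := by
  intro n
  induction n with
  | zero =>
    have h : T.sphSet 1 = T.children T.o := by
      rw [T.sphSet_succ 0, T.sphSet_zero]
      simp
    have ho : T.nrm T.o = 0 := by
      simp [HomTree.nrm, SimpleGraph.dist_self]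
    constructor
    · rw [h]; exact T.children_finite hq T.o
    · rw [h, T.ncard_children hq T.o, if_pos ho]
      simp
  | succ m ih =>
    obtain ⟨hfin, hcard⟩ := ih
    classical
    let A : Finset T.X := hfin.toFinset
    let B : T.X → Finset T.X := fun x => (T.children_finite hq x).toFinset
    have hU : T.sphSet (m + 2) = ↑(A.biUnion B) := by
      rw [T.sphSet_succ (m + 1)]
      ext y
      simp only [Finset.coe_biUnion, Set.mem_iUnion, Finset.mem_coe, Set.Finite.mem_toFinset,
        Set.Finite.coe_toFinset, A, B]
      try tauto
    have hdisj : ∀ x₁ ∈ A, ∀ x₂ ∈ A, x₁ ≠ x₂ → Disjoint (B x₁) (B x₂) := by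
      intro x₁ h₁ x₂ h₂ hne
      rw [Finset.disjoint_left]
      intro y hy₁ hy₂
      simp only [Set.Finite.mem_toFinset, B] at hy₁ hy₂
      simp only [Set.Finite.mem_toFinset, sphSet, Set.mem_setOf_eq, A] at h₁ h₂
      have hy1' := hy₁.2
      have hy2' := hy₂.2
      have hyn : T.nrm y = m + 2 := by omega
      exact hne (T.parent_unique hyn hy₁.1.symm (by omega) hy₂.1.symm (by omega))
    have hcardB : ∀ x ∈ A, (B x).card = q := by
      intro x hx
      simp only [Set.Finite.mem_toFinset, sphSet, Set.mem_setOf_eq, A] at hx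
      have hbc : (B x).card = (T.children x).ncard :=
        (Set.ncard_eq_toFinset_card _ (T.children_finite hq x)).symm
      rw [hbc, T.ncard_children hq x, if_neg (by omega)]
    constructor
    · rw [hU]; exact (A.biUnion B).finite_toSet
    · rw [hU, Set.ncard_coe_finset, Finset.card_biUnion hdisj]
      rw [Finset.sum_congr rfl hcardB, Finset.sum_const, smul_eq_mul]
      have hA : A.card = (q + 1) * q ^ m := by
        rw [← hcard, Set.ncard_eq_toFinset_card _ hfin]
      rw [hA]
      ring

lemma sphSet_finite (hq : 2 ≤ q) (n : ℕ) : (T.sphSet n).Finite := by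
  cases n with
  | zero => rw [T.sphSet_zero]; exact Set.finite_singleton _
  | succ m => exact (T.sphSet_card hq m).1

lemma sphSet_ncard_le (hq : 2 ≤ q) (n : ℕ) : (T.sphSet n).ncard ≤ 2 * q ^ n := by
  cases n with
  | zero => rw [T.sphSet_zero, Set.ncard_singleton]; simp
  | succ m =>
    rw [(T.sphSet_card hq m).2]
    calc (q + 1) * q ^ m ≤ (2 * q) * q ^ m := by
          apply Nat.mul_le_mul_right; omega
      _ = 2 * q ^ (m + 1) := by ring

lemma sphSet_ncard_ge (hq : 2 ≤ q) (n : ℕ) : q ^ n ≤ (T.sphSet n).ncard := by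
  cases n with
  | zero => rw [T.sphSet_zero, Set.ncard_singleton]; simp
  | succ m =>
    rw [(T.sphSet_card hq m).2]
    calc q ^ (m + 1) = q * q ^ m := by ring
      _ ≤ (q + 1) * q ^ m := by apply Nat.mul_le_mul_right; omega

end TreeCombinatorics

section Analysis

open Classical in
/-- the radial profile of the spherical function -/
def prof (q : ℕ) (z : ℂ) (n : ℕ) : ℂ :=
  if ∃ k : ℤ, z = (k : ℂ) * (tau q : ℂ) then
    ((((q : ℂ) - 1) / ((q : ℂ) + 1)) * (n : ℂ) + 1) * (q : ℂ) ^ (-(n : ℂ) / 2)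
  else if ∃ k : ℤ, z = (tau q : ℂ) / 2 + (k : ℂ) * (tau q : ℂ) then
    (-1) ^ n * ((((q : ℂ) - 1) / ((q : ℂ) + 1)) * (n : ℂ) + 1) * (q : ℂ) ^ (-(n : ℂ) / 2)
  else
    cfun q z * (q : ℂ) ^ ((I * z - 1 / 2) * (n : ℂ)) +
      cfun q (-z) * (q : ℂ) ^ ((-(I * z) - 1 / 2) * (n : ℂ))

lemma sph_eq_prof {q : ℕ} (T : HomTree q) (z : ℂ) (x : T.X) :
    T.sph z x = prof q z (T.nrm x) := rfl

lemma prof_neg {q : ℕ} (z : ℂ) (n : ℕ) : prof q (-z) n = prof q z n := by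
  classical
  unfold prof
  have h1 : (∃ k : ℤ, -z = (k : ℂ) * (tau q : ℂ)) ↔ ∃ k : ℤ, z = (k : ℂ) * (tau q : ℂ) := by
    constructor
    · rintro ⟨k, hk⟩
      exact ⟨-k, by push_cast; linear_combination -hk⟩
    · rintro ⟨k, hk⟩
      exact ⟨-k, by push_cast; linear_combination -hk⟩
  have h2 : (∃ k : ℤ, -z = (tau q : ℂ) / 2 + (k : ℂ) * (tau q : ℂ)) ↔
      ∃ k : ℤ, z = (tau q : ℂ) / 2 + (k : ℂ) * (tau q : ℂ) := by
    constructor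
    · rintro ⟨k, hk⟩
      exact ⟨-(k + 1), by push_cast; linear_combination -hk⟩
    · rintro ⟨k, hk⟩
      exact ⟨-(k + 1), by push_cast; linear_combination -hk⟩
  rw [if_congr h1 rfl rfl]
  by_cases hc1 : ∃ k : ℤ, z = (k : ℂ) * (tau q : ℂ)
  · rw [if_pos hc1, if_pos hc1]
  · rw [if_neg hc1, if_neg hc1, if_congr h2 rfl rfl]
    by_cases hc2 : ∃ k : ℤ, z = (tau q : ℂ) / 2 + (k : ℂ) * (tau q : ℂ)
    · rw [if_pos hc2, if_pos hc2]
    · rw [if_neg hc2, if_neg hc2, neg_neg]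
      have e1 : (I * -z - 1 / 2) * (n : ℂ) = (-(I * z) - 1 / 2) * (n : ℂ) := by ring
      have e2 : (-(I * -z) - 1 / 2) * (n : ℂ) = (I * z - 1 / 2) * (n : ℂ) := by ring
      rw [e1, e2]
      ring

lemma special_im_eq_zero {q : ℕ} {z : ℂ}
    (h : (∃ k : ℤ, z = (k : ℂ) * (tau q : ℂ)) ∨
      ∃ k : ℤ, z = (tau q : ℂ) / 2 + (k : ℂ) * (tau q : ℂ)) : z.im = 0 := by
  rcases h with ⟨k, hk⟩ | ⟨k, hk⟩ <;> subst hk <;> simp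

lemma q_real_gt_one {q : ℕ} (hq : 2 ≤ q) : (1 : ℝ) < (q : ℝ) := by
  exact_mod_cast Nat.lt_of_lt_of_le one_lt_two hq

lemma abs_q_cpow {q : ℕ} (hq : 2 ≤ q) (w : ℂ) :
    cabs ((q : ℂ) ^ w) = (q : ℝ) ^ w.re := by
  have h : ((q : ℂ)) = (((q : ℝ) : ℝ) : ℂ) := by norm_cast
  rw [h]
  exact Complex.norm_cpow_eq_rpow_re_of_pos (by linarith [q_real_gt_one hq]) w

lemma cfun_ne_zero {q : ℕ} (hq : 2 ≤ q) {z : ℂ} (him : z.im < 0) : cfun q z ≠ 0 := by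
  have hQ := q_real_gt_one hq
  have hq0 : (q : ℂ) ≠ 0 := by
    simp only [ne_eq, Nat.cast_eq_zero]
    omega
  have habs : ∀ a b : ℝ, (q:ℝ) ^ a = (q:ℝ) ^ b → a = b := by
    intro a b hab
    by_contra hne
    rcases lt_or_gt_of_ne hne with h | h
    · exact absurd hab (ne_of_lt (Real.rpow_lt_rpow_left_iff hQ |>.mpr h))
    · exact absurd hab.symm (ne_of_lt (Real.rpow_lt_rpow_left_iff hQ |>.mpr h))
  unfold cfun
  apply mul_ne_zero
  · apply div_ne_zero
    · intro h
      rw [Complex.cpow_eq_zero_iff] at h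
      exact hq0 h.1
    · intro h
      have h2 := congrArg Complex.re h
      simp only [Complex.add_re, Complex.natCast_re, Complex.one_re, Complex.zero_re] at h2
      linarith
  · apply div_ne_zero
    · intro h
      rw [sub_eq_zero] at h
      have := congrArg cabs h
      rw [abs_q_cpow hq, abs_q_cpow hq] at this
      have h1 : ((1:ℂ)/2 + I*z).re = 1/2 - z.im := by
        simp only [Complex.add_re, Complex.mul_re, Complex.I_re, Complex.I_im, Complex.div_re,
          Complex.one_re, Complex.one_im, Complex.div_im]
        norm_num
        ring
      have h2 : (-(1:ℂ)/2 - I*z).re = -(1/2) + z.im := by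
        simp only [Complex.sub_re, Complex.mul_re, Complex.I_re, Complex.I_im, Complex.div_re,
          Complex.one_re, Complex.one_im, Complex.div_im, Complex.neg_re, Complex.neg_im]
        norm_num
      rw [h1, h2] at this
      have := habs _ _ this
      linarith
    · intro h
      rw [sub_eq_zero] at h
      have := congrArg cabs h
      rw [abs_q_cpow hq, abs_q_cpow hq] at this
      have h1 : (I*z).re = -z.im := by simp
      have h2 : (-(I*z)).re = z.im := by simp
      rw [h1, h2] at this
      have := habs _ _ this
      linarith

lemma summable_radial {q : ℕ} (hq : 2 ≤ q) (T : HomTree q) (g : ℕ → ℝ)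
    (hg : ∀ n, 0 ≤ g n) :
    Summable (fun x : T.X => g (T.nrm x)) ↔
      Summable (fun n : ℕ => ((T.sphSet n).ncard : ℝ) * g n) := by
  rw [← (Equiv.sigmaFiberEquiv T.nrm).summable_iff]
  have hcomp : ((fun x : T.X => g (T.nrm x)) ∘ (Equiv.sigmaFiberEquiv T.nrm)) =
      fun p : Σ n : ℕ, {x : T.X // T.nrm x = n} => g (T.nrm p.2.1) := by
    funext p
    rfl
  rw [hcomp, summable_sigma_of_nonneg
    (f := fun p : Σ n : ℕ, {x : T.X // T.nrm x = n} => g (T.nrm p.2.1)) (fun _ => hg _)]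
  haveI hfin : ∀ n : ℕ, Finite {x : T.X // T.nrm x = n} :=
    fun n => (T.sphSet_finite hq n).to_subtype
  have key : ∀ n : ℕ, (∑' x : {x : T.X // T.nrm x = n},
      g (T.nrm x.1)) = ((T.sphSet n).ncard : ℝ) * g n := by
    intro n
    have h1 : ∀ x : {x : T.X // T.nrm x = n}, g (T.nrm x.1) = g n := by
      intro x
      rw [x.2]
    rw [tsum_congr h1]
    haveI : Fintype {x : T.X // T.nrm x = n} := Fintype.ofFinite _
    rw [tsum_fintype, Finset.sum_const, nsmul_eq_mul]
    congr 1
    have h2 : (T.sphSet n).ncard = Nat.card {x : T.X // T.nrm x = n} :=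
      (Nat.card_coe_set_eq (T.sphSet n)).symm
    rw [h2, Nat.card_eq_fintype_card]
    simp
  constructor
  · rintro ⟨h1, h2⟩
    exact (summable_congr key).mp h2
  · intro h
    exact ⟨fun n => Summable.of_finite, (summable_congr key).mpr h⟩

lemma summable_poly_geom {e ρ : ℝ} (he : 0 ≤ e) (h0 : 0 < ρ) (h1 : ρ < 1) :
    Summable (fun n : ℕ => ((n : ℝ) + 1) ^ e * ρ ^ n) := by
  set k := ⌈e⌉₊ with hk
  have h2 : Summable (fun n : ℕ => (n : ℝ) ^ k * ρ ^ n) := by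
    have := summable_pow_mul_geometric_of_norm_lt_one (R := ℝ) k
      (r := ρ) (by rw [Real.norm_eq_abs, abs_of_pos h0]; exact h1)
    exact this
  have h3 : Summable (fun n : ℕ => ((n + 1 : ℕ) : ℝ) ^ k * ρ ^ (n + 1)) :=
    h2.comp_injective (add_left_injective 1)
  have h4 : Summable (fun n : ℕ => ρ⁻¹ * (((n + 1 : ℕ) : ℝ) ^ k * ρ ^ (n + 1))) :=
    h3.mul_left ρ⁻¹
  apply Summable.of_nonneg_of_le _ _ h4
  · intro n
    positivity
  · intro n
    have hb : (1 : ℝ) ≤ (n : ℝ) + 1 := by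
      have : (0:ℝ) ≤ (n:ℝ) := Nat.cast_nonneg n
      linarith
    have h5 : ((n : ℝ) + 1) ^ e ≤ ((n : ℝ) + 1) ^ (k : ℝ) :=
      Real.rpow_le_rpow_of_exponent_le hb (Nat.le_ceil e)
    have h6 : ((n : ℝ) + 1) ^ (k : ℝ) = ((n + 1 : ℕ) : ℝ) ^ k := by
      rw [Real.rpow_natCast]
      push_cast
      ring
    have h7 : ρ⁻¹ * (((n + 1 : ℕ) : ℝ) ^ k * ρ ^ (n + 1)) = ((n + 1 : ℕ) : ℝ) ^ k * ρ ^ n := by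
      field_simp
      ring
    rw [h7]
    apply mul_le_mul_of_nonneg_right _ (le_of_lt (pow_pos h0 n))
    rw [← h6]
    exact h5

lemma rpow_geom {Q : ℝ} (hQ0 : 0 < Q) (e : ℝ) (n : ℕ) : Q ^ (e * n) = (Q ^ e) ^ n := by
  rw [Real.rpow_mul hQ0.le, Real.rpow_natCast]

lemma abs_coeff {q : ℕ} (hq : 2 ≤ q) (n : ℕ) :
    cabs ((((q : ℂ) - 1) / ((q : ℂ) + 1)) * (n : ℂ) + 1) =
      (((q : ℝ) - 1) / ((q : ℝ) + 1)) * n + 1 := by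
  have hQ := q_real_gt_one hq
  have h : ((((q : ℂ) - 1) / ((q : ℂ) + 1)) * (n : ℂ) + 1) =
      ((((((q : ℝ) - 1) / ((q : ℝ) + 1)) * n + 1 : ℝ)) : ℂ) := by push_cast; ring
  rw [h, cabs_ofReal]
  have hd : 0 ≤ ((q : ℝ) - 1) / ((q : ℝ) + 1) := div_nonneg (by linarith) (by linarith)
  exact abs_of_nonneg (add_nonneg (mul_nonneg hd (Nat.cast_nonneg n)) zero_le_one)

lemma abs_cpow_half {q : ℕ} (hq : 2 ≤ q) (n : ℕ) :
    cabs ((q : ℂ) ^ (-(n : ℂ) / 2)) = (q : ℝ) ^ ((-(1 : ℝ) / 2) * n) := by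
  rw [abs_q_cpow hq]
  congr 1
  have h : (-(n : ℂ) / 2).re = -(n : ℝ) / 2 := by simp
  rw [h]
  ring

lemma coeff_le {q : ℕ} (hq : 2 ≤ q) (n : ℕ) :
    (((q : ℝ) - 1) / ((q : ℝ) + 1)) * n + 1 ≤ (n : ℝ) + 1 := by
  have hQ := q_real_gt_one hq
  have hd : ((q : ℝ) - 1) / ((q : ℝ) + 1) ≤ 1 := by
    rw [div_le_one (by linarith)]
    linarith
  have := mul_le_of_le_one_left (Nat.cast_nonneg (α := ℝ) n) hd
  linarith

lemma re_exp1 (z : ℂ) (n : ℕ) : ((I * z - 1 / 2) * (n : ℂ)).re = (-z.im - 1 / 2) * n := by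
  simp [Complex.mul_re, Complex.mul_im]

lemma re_exp2 (z : ℂ) (n : ℕ) : ((-(I * z) - 1 / 2) * (n : ℂ)).re = (z.im - 1 / 2) * n := by
  simp [Complex.mul_re, Complex.mul_im]

lemma abs_prof_le {q : ℕ} (hq : 2 ≤ q) (z : ℂ) : ∃ C : ℝ, 0 < C ∧ ∀ n : ℕ,
    cabs (prof q z n) ≤ C * (((n : ℝ) + 1) * (q : ℝ) ^ ((|z.im| - 1 / 2) * n)) := by
  classical
  have hQ := q_real_gt_one hq
  have hQ0 : (0 : ℝ) < (q : ℝ) := by linarith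
  by_cases h1 : ∃ k : ℤ, z = (k : ℂ) * (tau q : ℂ)
  · refine ⟨1, one_pos, fun n => ?_⟩
    have him : z.im = 0 := special_im_eq_zero (Or.inl h1)
    have hv : prof q z n =
        ((((q : ℂ) - 1) / ((q : ℂ) + 1)) * (n : ℂ) + 1) * (q : ℂ) ^ (-(n : ℂ) / 2) := by
      unfold prof
      rw [if_pos h1]
    rw [hv, map_mul, abs_coeff hq, abs_cpow_half hq, one_mul, him, abs_zero]
    have he : ((0 : ℝ) - 1 / 2) * n = (-(1 : ℝ) / 2) * n := by ring
    rw [he]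
    exact mul_le_mul_of_nonneg_right (coeff_le hq n) (Real.rpow_nonneg hQ0.le _)
  · by_cases h2 : ∃ k : ℤ, z = (tau q : ℂ) / 2 + (k : ℂ) * (tau q : ℂ)
    · refine ⟨1, one_pos, fun n => ?_⟩
      have him : z.im = 0 := special_im_eq_zero (Or.inr h2)
      have hv : prof q z n = (-1) ^ n *
          (((((q : ℂ) - 1) / ((q : ℂ) + 1)) * (n : ℂ) + 1) * (q : ℂ) ^ (-(n : ℂ) / 2)) := by
        unfold prof
        rw [if_neg h1, if_pos h2]
        ring
      have habs1 : cabs ((-1 : ℂ) ^ n) = 1 := by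
        rw [map_pow]
        simp
      rw [hv, map_mul, habs1, one_mul, map_mul, abs_coeff hq, abs_cpow_half hq, one_mul,
        him, abs_zero]
      have he : ((0 : ℝ) - 1 / 2) * n = (-(1 : ℝ) / 2) * n := by ring
      rw [he]
      exact mul_le_mul_of_nonneg_right (coeff_le hq n) (Real.rpow_nonneg hQ0.le _)
    · refine ⟨cabs (cfun q z) + cabs (cfun q (-z)) + 1, by positivity, fun n => ?_⟩
      have hv : prof q z n = cfun q z * (q : ℂ) ^ ((I * z - 1 / 2) * (n : ℂ)) +
          cfun q (-z) * (q : ℂ) ^ ((-(I * z) - 1 / 2) * (n : ℂ)) := by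
        unfold prof
        rw [if_neg h1, if_neg h2]
      have hb1 : -z.im ≤ |z.im| := neg_le_abs z.im
      have hb2 : z.im ≤ |z.im| := le_abs_self z.im
      have ht1 : cabs (cfun q z * (q : ℂ) ^ ((I * z - 1 / 2) * (n : ℂ))) ≤
          cabs (cfun q z) * (q : ℝ) ^ ((|z.im| - 1 / 2) * n) := by
        rw [map_mul, abs_q_cpow hq, re_exp1]
        apply mul_le_mul_of_nonneg_left _ (AbsoluteValue.nonneg _ _)
        apply Real.rpow_le_rpow_of_exponent_le hQ.le
        apply mul_le_mul_of_nonneg_right _ (Nat.cast_nonneg n)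
        linarith
      have ht2 : cabs (cfun q (-z) * (q : ℂ) ^ ((-(I * z) - 1 / 2) * (n : ℂ))) ≤
          cabs (cfun q (-z)) * (q : ℝ) ^ ((|z.im| - 1 / 2) * n) := by
        rw [map_mul, abs_q_cpow hq, re_exp2]
        apply mul_le_mul_of_nonneg_left _ (AbsoluteValue.nonneg _ _)
        apply Real.rpow_le_rpow_of_exponent_le hQ.le
        apply mul_le_mul_of_nonneg_right _ (Nat.cast_nonneg n)
        linarith
      have hrn : (0 : ℝ) ≤ (q : ℝ) ^ ((|z.im| - 1 / 2) * n) := Real.rpow_nonneg hQ0.le _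
      have hn1 : (1 : ℝ) ≤ (n : ℝ) + 1 := by
        have : (0 : ℝ) ≤ (n : ℝ) := Nat.cast_nonneg n
        linarith
      calc cabs (prof q z n) ≤
          cabs (cfun q z * (q : ℂ) ^ ((I * z - 1 / 2) * (n : ℂ))) +
            cabs (cfun q (-z) * (q : ℂ) ^ ((-(I * z) - 1 / 2) * (n : ℂ))) := by
            rw [hv]; exact AbsoluteValue.add_le _ _ _
        _ ≤ (cabs (cfun q z) + cabs (cfun q (-z))) *
              (q : ℝ) ^ ((|z.im| - 1 / 2) * n) := by
            rw [add_mul]; exact add_le_add ht1 ht2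
        _ ≤ (cabs (cfun q z) + cabs (cfun q (-z)) + 1) *
              (((n : ℝ) + 1) * (q : ℝ) ^ ((|z.im| - 1 / 2) * n)) := by
            have hC : cabs (cfun q z) + cabs (cfun q (-z)) ≤
                (cabs (cfun q z) + cabs (cfun q (-z)) + 1) * ((n : ℝ) + 1) := by
              have h0 : (0 : ℝ) ≤ cabs (cfun q z) + cabs (cfun q (-z)) :=
                add_nonneg (AbsoluteValue.nonneg _ _) (AbsoluteValue.nonneg _ _)
              nlinarith
            calc (cabs (cfun q z) + cabs (cfun q (-z))) *
                  (q : ℝ) ^ ((|z.im| - 1 / 2) * n) ≤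
                ((cabs (cfun q z) + cabs (cfun q (-z)) + 1) * ((n : ℝ) + 1)) *
                  (q : ℝ) ^ ((|z.im| - 1 / 2) * n) :=
                mul_le_mul_of_nonneg_right hC hrn
              _ = _ := by ring

lemma abs_prof_ge {q : ℕ} (hq : 2 ≤ q) {z : ℂ} (him : z.im < 0) :
    ∃ ε : ℝ, 0 < ε ∧ ∃ N : ℕ, ∀ n ≥ N,
      ε * (q : ℝ) ^ ((-z.im - 1 / 2) * n) ≤ cabs (prof q z n) := by
  classical
  have hQ := q_real_gt_one hq
  have hQ0 : (0 : ℝ) < (q : ℝ) := by linarith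
  have h1 : ¬∃ k : ℤ, z = (k : ℂ) * (tau q : ℂ) := fun h =>
    absurd (special_im_eq_zero (q := q) (Or.inl h)) (ne_of_lt him)
  have h2 : ¬∃ k : ℤ, z = (tau q : ℂ) / 2 + (k : ℂ) * (tau q : ℂ) := fun h =>
    absurd (special_im_eq_zero (q := q) (Or.inr h)) (ne_of_lt him)
  have hv : ∀ n : ℕ, prof q z n = cfun q z * (q : ℂ) ^ ((I * z - 1 / 2) * (n : ℂ)) +
      cfun q (-z) * (q : ℂ) ^ ((-(I * z) - 1 / 2) * (n : ℂ)) := by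
    intro n
    unfold prof
    rw [if_neg h1, if_neg h2]
  set c1 := cabs (cfun q z) with hc1def
  set c2 := cabs (cfun q (-z)) with hc2def
  have hc1 : 0 < c1 := AbsoluteValue.pos _ (cfun_ne_zero hq him)
  set b := -z.im with hbdef
  have hb : 0 < b := by simp [hbdef]; linarith
  have hrlt : (q : ℝ) ^ (-(2 * b)) < 1 :=
    Real.rpow_lt_one_of_one_lt_of_neg hQ (by linarith)
  have hr0 : 0 ≤ (q : ℝ) ^ (-(2 * b)) := Real.rpow_nonneg hQ0.le _
  have htend : Filter.Tendsto (fun n : ℕ => c2 * ((q : ℝ) ^ (-(2 * b))) ^ n)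
      Filter.atTop (nhds 0) := by
    have := tendsto_pow_atTop_nhds_zero_of_lt_one hr0 hrlt
    simpa using this.const_mul c2
  have hev : ∀ᶠ n : ℕ in Filter.atTop, c2 * ((q : ℝ) ^ (-(2 * b))) ^ n < c1 / 2 := by
    apply htend.eventually_lt_const
    positivity
  obtain ⟨N, hN⟩ := Filter.eventually_atTop.mp hev
  refine ⟨c1 / 2, by positivity, N, fun n hn => ?_⟩
  have habs1 : cabs (cfun q z * (q : ℂ) ^ ((I * z - 1 / 2) * (n : ℂ))) =
      c1 * (q : ℝ) ^ ((b - 1 / 2) * n) := by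
    rw [map_mul, abs_q_cpow hq, re_exp1]
  have habs2 : cabs (cfun q (-z) * (q : ℂ) ^ ((-(I * z) - 1 / 2) * (n : ℂ))) =
      c2 * (q : ℝ) ^ ((-b - 1 / 2) * n) := by
    rw [map_mul, abs_q_cpow hq, re_exp2]
    congr 2
    simp [hbdef]
  have hsplit : (q : ℝ) ^ ((-b - 1 / 2) * n) =
      (q : ℝ) ^ ((b - 1 / 2) * n) * ((q : ℝ) ^ (-(2 * b))) ^ n := by
    rw [← rpow_geom hQ0, ← Real.rpow_add hQ0]
    congr 1
    ring
  have hlow : c1 * (q : ℝ) ^ ((b - 1 / 2) * n) - c2 * (q : ℝ) ^ ((-b - 1 / 2) * n) ≤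
      cabs (prof q z n) := by
    rw [hv n]
    have := norm_sub_norm_le (cfun q z * (q : ℂ) ^ ((I * z - 1 / 2) * (n : ℂ)))
      (-(cfun q (-z) * (q : ℂ) ^ ((-(I * z) - 1 / 2) * (n : ℂ))))
    rw [sub_neg_eq_add, norm_neg] at this
    rw [← habs1, ← habs2]
    exact this
  have hrpos : (0 : ℝ) < (q : ℝ) ^ ((b - 1 / 2) * n) := Real.rpow_pos_of_pos hQ0 _
  have hbound : c2 * (q : ℝ) ^ ((-b - 1 / 2) * n) ≤ (c1 / 2) * (q : ℝ) ^ ((b - 1 / 2) * n) := by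
    rw [hsplit]
    have hNn := le_of_lt (hN n hn)
    calc c2 * ((q : ℝ) ^ ((b - 1 / 2) * n) * ((q : ℝ) ^ (-(2 * b))) ^ n) =
        (c2 * ((q : ℝ) ^ (-(2 * b))) ^ n) * (q : ℝ) ^ ((b - 1 / 2) * n) := by ring
      _ ≤ (c1 / 2) * (q : ℝ) ^ ((b - 1 / 2) * n) :=
        mul_le_mul_of_nonneg_right hNn hrpos.le
  have hfin : (c1 / 2) * (q : ℝ) ^ ((-z.im - 1 / 2) * n) =
      c1 * (q : ℝ) ^ ((b - 1 / 2) * n) - (c1 / 2) * (q : ℝ) ^ ((b - 1 / 2) * n) := by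
    rw [← hbdef]
    ring
  rw [hfin]
  linarith

lemma rpow_swap {Q : ℝ} (hQ0 : 0 < Q) {e c : ℝ} (n : ℕ) :
    (Q ^ (e * n)) ^ c = (Q ^ (e * c)) ^ n := by
  rw [← Real.rpow_mul hQ0.le, ← rpow_geom hQ0]
  congr 1
  ring

end Analysis


/-- For `1 < p < 2`, `φ_z ∈ L^{p′}(𝔛)` iff `|Im z| < 1/p - 1/2`. -/
theorem statement0 {q : ℕ} (hq : 2 ≤ q) (T : HomTree q) (p p' : ℝ)
    (hp : 1 < p) (hp2 : p < 2) (hconj : 1 / p + 1 / p' = 1) (z : ℂ) :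
    Summable (fun x : T.X => ‖T.sph z x‖ ^ p') ↔ |z.im| < 1 / p - 1 / 2 := by
  classical
  have hQ : (1 : ℝ) < (q : ℝ) := q_real_gt_one hq
  have hQ0 : (0 : ℝ) < (q : ℝ) := by linarith
  have hppos : (0 : ℝ) < p := by linarith
  have h1p_lt : 1 / p < 1 := by rw [div_lt_one hppos]; exact hp
  have h1p_gt : 1 / 2 < 1 / p := by
    rw [div_lt_div_iff₀ two_pos hppos]
    linarith
  have hip' : 0 < 1 / p' := by linarith
  have hp'pos : 0 < p' := one_div_pos.mp hip'
  have hp'ne : p' ≠ 0 := ne_of_gt hp'pos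
  have hinv : p' * (1 / p') = 1 := by field_simp
  have hkey : p' * (1 / p - 1) = -1 := by linear_combination p' * hconj - hinv
  have hgnn : ∀ n : ℕ, 0 ≤ cabs (prof q z n) ^ p' :=
    fun n => Real.rpow_nonneg (AbsoluteValue.nonneg _ _) p'
  have hfun : (fun x : T.X => ‖T.sph z x‖ ^ p') =
      fun x : T.X => cabs (prof q z (T.nrm x)) ^ p' := rfl
  rw [hfun, summable_radial hq T (fun n => cabs (prof q z n) ^ p') hgnn]
  constructor
  · -- summable implies strip
    intro hsum
    by_contra hge
    push_neg at hge
    have hzim : z.im ≠ 0 := by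
      intro h0
      rw [h0, abs_zero] at hge
      linarith
    set w := if z.im < 0 then z else -z with hw
    have hwim : w.im < 0 := by
      by_cases h : z.im < 0
      · rw [hw, if_pos h]; exact h
      · rw [hw, if_neg h]
        have h5 : 0 < z.im := lt_of_le_of_ne (not_lt.mp h) (Ne.symm hzim)
        simpa using h5
    have hwabs : -w.im = |z.im| := by
      by_cases h : z.im < 0
      · rw [hw, if_pos h, abs_of_neg h]
      · rw [hw, if_neg h]
        have h0 : 0 ≤ z.im := not_lt.mp h
        simp only [Complex.neg_im, neg_neg]
        exact (_root_.abs_of_nonneg h0).symm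
    have hprofw : ∀ n : ℕ, prof q w n = prof q z n := by
      intro n
      by_cases h : z.im < 0
      · rw [hw, if_pos h]
      · rw [hw, if_neg h]; exact prof_neg z n
    obtain ⟨ε, hε, N, hN⟩ := abs_prof_ge hq hwim
    simp only [hwabs] at hN
    have hεp : 0 < ε ^ p' := Real.rpow_pos_of_pos hε p'
    have hbδ : 1 / p - 1 ≤ |z.im| - 1 / 2 := by linarith
    have hep' : -1 ≤ (|z.im| - 1 / 2) * p' := by
      have h6 := mul_le_mul_of_nonneg_right hbδ hp'pos.le
      have h7 : (1 / p - 1) * p' = -1 := by linear_combination hkey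
      linarith
    have hone : (1 : ℝ) ≤ (q : ℝ) ^ (1 + (|z.im| - 1 / 2) * p') := by
      have h8 := Real.rpow_le_rpow_of_exponent_le hQ.le
        (show (0 : ℝ) ≤ 1 + (|z.im| - 1 / 2) * p' by linarith)
      rwa [Real.rpow_zero] at h8
    have hterm : ∀ n ≥ N, ε ^ p' ≤ ((T.sphSet n).ncard : ℝ) * cabs (prof q z n) ^ p' := by
      intro n hn
      have hcard : ((q : ℝ)) ^ n ≤ ((T.sphSet n).ncard : ℝ) := by
        exact_mod_cast T.sphSet_ncard_ge hq n
      have hlow := hN n hn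
      rw [hprofw n] at hlow
      have hg1 : (ε * (q : ℝ) ^ ((|z.im| - 1 / 2) * n)) ^ p' ≤ cabs (prof q z n) ^ p' :=
        Real.rpow_le_rpow (by positivity) hlow hp'pos.le
      have hg2 : (ε * (q : ℝ) ^ ((|z.im| - 1 / 2) * n)) ^ p' =
          ε ^ p' * ((q : ℝ) ^ ((|z.im| - 1 / 2) * p')) ^ n := by
        rw [Real.mul_rpow hε.le (Real.rpow_nonneg hQ0.le _), rpow_swap hQ0]
      have hQn : (1 : ℝ) ≤ ((q : ℝ) ^ (1 + (|z.im| - 1 / 2) * p')) ^ n := one_le_pow₀ hone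
      have hsplitpow : (q : ℝ) ^ n * ((q : ℝ) ^ ((|z.im| - 1 / 2) * p')) ^ n =
          ((q : ℝ) ^ (1 + (|z.im| - 1 / 2) * p')) ^ n := by
        rw [Real.rpow_add hQ0, Real.rpow_one, mul_pow]
      have hgge : ε ^ p' * ((q : ℝ) ^ ((|z.im| - 1 / 2) * p')) ^ n ≤
          cabs (prof q z n) ^ p' := by
        rw [← hg2]; exact hg1
      calc ε ^ p' = ε ^ p' * 1 := by ring
        _ ≤ ε ^ p' * ((q : ℝ) ^ (1 + (|z.im| - 1 / 2) * p')) ^ n :=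
            mul_le_mul_of_nonneg_left hQn hεp.le
        _ = (q : ℝ) ^ n * (ε ^ p' * ((q : ℝ) ^ ((|z.im| - 1 / 2) * p')) ^ n) := by
            rw [← hsplitpow]; ring
        _ ≤ ((T.sphSet n).ncard : ℝ) * cabs (prof q z n) ^ p' :=
            mul_le_mul hcard hgge (by positivity) (Nat.cast_nonneg _)
    have htendz := hsum.tendsto_atTop_zero
    have hevlt := htendz.eventually_lt_const hεp
    obtain ⟨M, hM⟩ := Filter.eventually_atTop.mp hevlt
    have hA := hterm (max N M) (le_max_left _ _)
    have hB := hM (max N M) (le_max_right _ _)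
    linarith
  · -- strip implies summable
    intro hlt
    obtain ⟨C, hC, hCle⟩ := abs_prof_le hq z
    have heneg : 1 + (|z.im| - 1 / 2) * p' < 0 := by
      have h5 : |z.im| - 1 / 2 < 1 / p - 1 := by linarith
      have h6 : (|z.im| - 1 / 2) * p' < (1 / p - 1) * p' := mul_lt_mul_of_pos_right h5 hp'pos
      have h7 : (1 / p - 1) * p' = -1 := by linear_combination hkey
      linarith
    set ρ := (q : ℝ) ^ (1 + (|z.im| - 1 / 2) * p') with hρ
    have hρpos : 0 < ρ := Real.rpow_pos_of_pos hQ0 _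
    have hρlt : ρ < 1 := Real.rpow_lt_one_of_one_lt_of_neg hQ heneg
    have hsummable : Summable (fun n : ℕ => (2 * C ^ p') * (((n : ℝ) + 1) ^ p' * ρ ^ n)) :=
      (summable_poly_geom hp'pos.le hρpos hρlt).mul_left _
    apply Summable.of_nonneg_of_le _ _ hsummable
    · intro n
      exact mul_nonneg (Nat.cast_nonneg _) (hgnn n)
    · intro n
      have hcard : ((T.sphSet n).ncard : ℝ) ≤ 2 * (q : ℝ) ^ n := by
        exact_mod_cast T.sphSet_ncard_le hq n
      have hb1 : cabs (prof q z n) ^ p' ≤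
          (C * (((n : ℝ) + 1) * (q : ℝ) ^ ((|z.im| - 1 / 2) * n))) ^ p' :=
        Real.rpow_le_rpow (AbsoluteValue.nonneg _ _) (hCle n) hp'pos.le
      have hb2 : (C * (((n : ℝ) + 1) * (q : ℝ) ^ ((|z.im| - 1 / 2) * n))) ^ p' =
          C ^ p' * (((n : ℝ) + 1) ^ p' * ((q : ℝ) ^ ((|z.im| - 1 / 2) * p')) ^ n) := by
        have hn1 : (0 : ℝ) ≤ (n : ℝ) + 1 := by positivity
        rw [Real.mul_rpow hC.le (mul_nonneg hn1 (Real.rpow_nonneg hQ0.le _)),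
          Real.mul_rpow hn1 (Real.rpow_nonneg hQ0.le _), rpow_swap hQ0]
      calc ((T.sphSet n).ncard : ℝ) * cabs (prof q z n) ^ p'
          ≤ (2 * (q : ℝ) ^ n) *
            (C ^ p' * (((n : ℝ) + 1) ^ p' * ((q : ℝ) ^ ((|z.im| - 1 / 2) * p')) ^ n)) := by
            apply mul_le_mul hcard _ (hgnn n) (by positivity)
            rw [← hb2]; exact hb1
        _ = (2 * C ^ p') * (((n : ℝ) + 1) ^ p' * ρ ^ n) := by
            rw [hρ, Real.rpow_add hQ0, Real.rpow_one, mul_pow]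
            ring

end HomTree
end
end

section
/- Let s ∈ ℝ with s ∉ (τ/2)ℤ. Then for every fixed integer n ≥ 0, (1/N)·∑_{m=n}^{N} |B′(n,m,s)|² converges to 2·|c(s)|² as N → ∞. -/
open Complex MeasureTheory ENNReal Filter

noncomputable section

namespace HomTree

/-- For `s ∈ ℝ \ (τ/2)ℤ` and any fixed `n ≥ 0`,
`(1/N)∑_{m=n}^N |B′(n,m,s)|² → 2|c(s)|²` as `N → ∞`. -/
theorem statement16 (q : ℕ) (hq : 2 ≤ q) (s : ℝ)
    (hs : ¬∃ k : ℤ, s = (k : ℝ) * (tau q / 2)) (n : ℕ) :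
    Tendsto (fun N : ℕ => (1 / (N : ℝ)) * ∑ m ∈ Finset.Icc n N, ‖Bp q s n m‖ ^ 2)
      atTop (nhds (2 * ‖cfun q (s : ℂ)‖ ^ 2)) := by
  have hq0 : (0:ℝ) < q := by positivity
  have hq1 : (1:ℝ) < q := by exact_mod_cast hq.trans_lt' one_lt_two
  have hqC : (q:ℂ) ≠ 0 := Nat.cast_ne_zero.mpr (by omega)
  set L : ℝ := Real.log q with hL
  have hL0 : 0 < L := Real.log_pos hq1
  -- cpow to exp
  have hcpow : ∀ w : ℂ, (q:ℂ)^w = Complex.exp (w * (L : ℂ)) := by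
    intro w
    have hcast : ((q:ℝ):ℂ) = (q:ℂ) := by norm_cast
    rw [Complex.cpow_def_of_ne_zero hqC, mul_comm, ← hcast, ← Complex.ofReal_log hq0.le]
  set θ : ℝ := s * L with hθ
  set A : ℂ := Complex.exp (θ * I) with hA
  set u : ℂ := A ^ 2 with hudef
  have hA0 : A ≠ 0 := Complex.exp_ne_zero _
  have hAinv : A⁻¹ = Complex.exp (-(θ * I)) := by rw [hA, ← Complex.exp_neg]
  have hu : u ≠ 1 := by
    intro h
    rw [hudef, hA, ← Complex.exp_nat_mul] at h
    rcases Complex.exp_eq_one_iff.mp h with ⟨k, hk⟩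
    apply hs
    refine ⟨k, ?_⟩
    have : (2 * θ : ℝ) = k * (2 * Real.pi) := by
      have := congrArg Complex.im hk
      simpa [Complex.ext_iff] using this
    have hpi : θ = k * Real.pi := by linarith [this]
    have : s = k * (Real.pi / L) := by
      field_simp [hθ] at hpi ⊢
      linarith [hpi]
    rw [this, tau, ← hL]; field_simp
  have huabs : ‖u‖ = 1 := by
    rw [hudef, hA]
    simp [Complex.norm_exp]
  -- b = q^{1/2}
  set b : ℂ := Complex.exp ((L:ℂ)/2) with hbdef
  have hb0 : b ≠ 0 := Complex.exp_ne_zero _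
  have hb2 : b^2 = (q:ℂ) := by
    rw [hbdef, ← Complex.exp_nat_mul]
    have : ((2:ℕ):ℂ) * ((L:ℂ)/2) = (L:ℂ) := by push_cast; ring
    rw [this, ← Complex.ofReal_exp, hL, Real.exp_log hq0]
    norm_cast
  have hconjA : (starRingEnd ℂ) A = A⁻¹ := by
    rw [hAinv, hA, ← Complex.exp_conj]
    congr 1
    simp [Complex.conj_I]
  have hconjb : (starRingEnd ℂ) b = b := by
    rw [hbdef, ← Complex.exp_conj]
    congr 1
    simp [map_ofNat]
  have hconju : (starRingEnd ℂ) u = u⁻¹ := by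
    rw [hudef, map_pow, hconjA, inv_pow]
  have hd : A - A⁻¹ ≠ 0 := by
    rw [sub_ne_zero]
    intro h
    apply hu
    rw [hudef, sq]
    nth_rewrite 2 [h]
    exact mul_inv_cancel₀ hA0
  have hq1C : (q:ℂ) + 1 ≠ 0 := Nat.cast_add_one_ne_zero q
  -- the c-function in terms of b and A
  have e1 : (q:ℂ)^((1:ℂ)/2) = b := by
    rw [hcpow, hbdef]; congr 1; ring
  have e2 : (q:ℂ)^((1:ℂ)/2 + I*(s:ℂ)) = b * A := by
    rw [hcpow, hbdef, hA, ← Complex.exp_add]; congr 1; push_cast [hθ]; ring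
  have e3 : (q:ℂ)^(-(1:ℂ)/2 - I*(s:ℂ)) = b⁻¹ * A⁻¹ := by
    rw [hcpow, hbdef, hAinv, ← Complex.exp_neg, ← Complex.exp_add]
    congr 1; push_cast [hθ]; ring
  have e4 : (q:ℂ)^(I*(s:ℂ)) = A := by
    rw [hcpow, hA]; congr 1; push_cast [hθ]; ring
  have e5 : (q:ℂ)^(-(I*(s:ℂ))) = A⁻¹ := by
    rw [hcpow, hAinv]; congr 1; push_cast [hθ]; ring
  set c : ℂ := cfun q (s:ℂ) with hcdef
  have hc : c = (b/((q:ℂ)+1)) * ((b*A - b⁻¹*A⁻¹)/(A - A⁻¹)) := by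
    rw [hcdef, cfun, e1, e2, e3, e4, e5]
  have hAA : A * A⁻¹ = 1 := mul_inv_cancel₀ hA0
  have hbb : b * b⁻¹ = 1 := mul_inv_cancel₀ hb0
  have hK : ((q:ℂ)+1) * (A - A⁻¹) ≠ 0 := mul_ne_zero hq1C hd
  have hu' : A * A - 1 ≠ 0 := by
    rw [← sq]
    exact sub_ne_zero.mpr (hudef ▸ hu)
  have hx : ((q:ℂ)+1) * ((q:ℂ)+1)⁻¹ = 1 := mul_inv_cancel₀ hq1C
  have hy : (A - A⁻¹) * (A - A⁻¹)⁻¹ = 1 := mul_inv_cancel₀ hd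
  have hcmul : c * (((q:ℂ)+1) * (A - A⁻¹)) = b * (b*A - b⁻¹*A⁻¹) := by
    rw [hc, div_eq_mul_inv, div_eq_mul_inv]
    linear_combination (b*(b*A - b⁻¹*A⁻¹)*(A - A⁻¹)⁻¹*(A - A⁻¹)) * hx
      + (b*(b*A - b⁻¹*A⁻¹)) * hy
  have hcmulc : (starRingEnd ℂ) c * (((q:ℂ)+1) * (A⁻¹ - A)) = b * (b*A⁻¹ - b⁻¹*A) := by
    have h2 := congrArg (starRingEnd ℂ) hcmul
    simp only [map_mul, map_sub, map_add, map_inv₀, map_one, hconjA, hconjb,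
      Complex.conj_natCast, inv_inv] at h2
    linear_combination h2
  have hconjc : c + (starRingEnd ℂ) c = 1 := by
    apply mul_right_cancel₀ hK
    linear_combination hcmul - hcmulc + (A - A⁻¹) * hb2 + (A - A⁻¹) * hbb
  -- power conversions
  have epow : ∀ (k : ℕ) (w : ℂ), w = (k:ℂ) → (q:ℂ)^(I*(s:ℂ)*w) = A^k := by
    intro k w hw
    rw [hcpow, hA, ← Complex.exp_nat_mul, hw]
    congr 1
    push_cast [hθ]
    ring
  have epowneg : ∀ (k : ℕ) (w : ℂ), w = (k:ℂ) → (q:ℂ)^(-(I*(s:ℂ)*w)) = (A⁻¹)^k := by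
    intro k w hw
    rw [hcpow, hAinv, ← Complex.exp_nat_mul, hw]
    congr 1
    push_cast [hθ]
    ring
  -- |z|^2 as re of z * conj z
  have habs2 : ∀ z : ℂ, (‖z‖)^2 = (z * (starRingEnd ℂ) z).re := by
    intro z
    rw [Complex.mul_conj, Complex.sq_norm]
    norm_cast
  have hcc : (c * (starRingEnd ℂ) c).re = (‖c‖)^2 := (habs2 c).symm
  -- the key identity
  have key : ∃ w : ℂ, ∀ m : ℕ, n ≤ m →
      (‖Bp q s n m‖)^2 = 2 * (‖c‖)^2 + (w * u^m).re := by
    rcases Nat.eq_zero_or_pos n with hn | hn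
    · refine ⟨2 * c * (1 - (starRingEnd ℂ) c), fun m _ => ?_⟩
      have hBp : Bp q s n m = (1-c) * (A⁻¹)^m + c * A^m := by
        rw [hn, Bp, if_pos rfl, epow m _ rfl, epowneg m _ rfl, ← hcdef]
        ring
      have hconjBp : (starRingEnd ℂ) (Bp q s n m) =
          (1 - (starRingEnd ℂ) c) * A^m + (starRingEnd ℂ) c * (A⁻¹)^m := by
        rw [hBp]
        simp only [map_add, map_mul, map_sub, map_one, map_pow, map_inv₀, hconjA, inv_inv]
      have hAm : (A⁻¹)^m * A^m = 1 := by
        rw [inv_pow]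
        exact inv_mul_cancel₀ (pow_ne_zero m hA0)
      have hA2 : A^m * A^m = u^m := by rw [hudef, ← mul_pow, sq]
      have hA2' : (A⁻¹)^m * (A⁻¹)^m = (u⁻¹)^m := by rw [hudef, ← mul_pow, sq, mul_inv]
      have hprod : Bp q s n m * (starRingEnd ℂ) (Bp q s n m) =
          2 * (c * (starRingEnd ℂ) c) + (c * (1 - (starRingEnd ℂ) c) * u^m
            + (starRingEnd ℂ) (c * (1 - (starRingEnd ℂ) c) * u^m)) := by
        rw [hconjBp, hBp]
        simp only [map_mul, map_sub, map_one, map_pow, hconju, Complex.conj_conj]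
        linear_combination ((1-c)*(1 - (starRingEnd ℂ) c) + c * (starRingEnd ℂ) c) * hAm
          + (c*(1 - (starRingEnd ℂ) c)) * hA2 + ((1-c) * (starRingEnd ℂ) c) * hA2'
          + ((u⁻¹)^m - 1) * ((starRingEnd ℂ) c) * hconjc
          + (((starRingEnd ℂ) c - 1) - (starRingEnd ℂ) c * A⁻¹ ^ (m*2)) * hconjc
      have h5 : 2 * c * (1 - (starRingEnd ℂ) c) * u^m =
          2 * (c * (1 - (starRingEnd ℂ) c) * u ^ m) := by ring
      rw [habs2, hprod, Complex.add_conj, Complex.mul_conj, h5, Complex.sq_norm]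
      simp only [Complex.add_re, Complex.ofReal_re, Complex.mul_re, Complex.re_ofNat,
        Complex.im_ofNat, Complex.ofReal_im, mul_zero, zero_mul, sub_zero]
    · have hn0 : n ≠ 0 := hn.ne'
      refine ⟨-2 * (c * (starRingEnd ℂ) c) * u * (u⁻¹)^n, fun m hm => ?_⟩
      set k := m - n + 1 with hk
      set p := n - 1 with hp
      have hkc : (m:ℂ) - (n:ℂ) + 1 = (k:ℂ) := by
        rw [hk]; push_cast [Nat.cast_sub hm]; ring
      have hpc : (n:ℂ) - 1 = (p:ℂ) := by
        rw [hp]; push_cast [Nat.cast_sub hn]; ring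
      have hBp : Bp q s n m = c * A^p * (A^k - (A⁻¹)^k) := by
        rw [Bp, if_neg hn0, ← hcdef]
        rw [show I*(s:ℂ)*((n:ℂ)-1) = I*(s:ℂ)*((p:ℕ):ℂ) by rw [hpc],
          show I*(s:ℂ)*((m:ℂ)-(n:ℂ)+1) = I*(s:ℂ)*((k:ℕ):ℂ) by rw [hkc]]
        rw [epow p _ rfl, epow k _ rfl, epowneg k _ rfl]
      have hconjBp : (starRingEnd ℂ) (Bp q s n m) =
          (starRingEnd ℂ) c * (A⁻¹)^p * ((A⁻¹)^k - A^k) := by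
        rw [hBp]
        simp only [map_mul, map_sub, map_pow, map_inv₀, hconjA, inv_inv]
      have hpk : A^p * (A⁻¹)^p = 1 := by
        rw [inv_pow]; exact mul_inv_cancel₀ (pow_ne_zero p hA0)
      have hk1 : A^k * (A⁻¹)^k = 1 := by
        rw [inv_pow]; exact mul_inv_cancel₀ (pow_ne_zero k hA0)
      have hk2 : A^k * A^k = u^k := by rw [hudef, ← mul_pow, sq]
      have hk3 : (A⁻¹)^k * (A⁻¹)^k = (u⁻¹)^k := by rw [hudef, ← mul_pow, sq, mul_inv]
      have hprod : Bp q s n m * (starRingEnd ℂ) (Bp q s n m) =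
          2 * (c * (starRingEnd ℂ) c) + (-(c * (starRingEnd ℂ) c) * u^k
            + (starRingEnd ℂ) (-(c * (starRingEnd ℂ) c) * u^k)) := by
        rw [hconjBp, hBp]
        simp only [map_mul, map_neg, map_pow, hconju, Complex.conj_conj]
        linear_combination (c * (starRingEnd ℂ) c *
            (2*(A^k)*((A⁻¹)^k) - A^k*A^k - (A⁻¹)^k*(A⁻¹)^k)) * hpk
          + (2*(c * (starRingEnd ℂ) c)) * hk1
          + (-(c * (starRingEnd ℂ) c)) * hk2 + (-(c * (starRingEnd ℂ) c)) * hk3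
      have hu0 : u ≠ 0 := by rw [hudef]; exact pow_ne_zero _ hA0
      have hupow : u * (u⁻¹)^n * u^m = u^k := by
        have h8 : u^(m-n) * u^n = u^m := by
          rw [← pow_add]; congr 1; omega
        have hun : u^n ≠ 0 := pow_ne_zero _ hu0
        rw [hk, pow_succ]
        have hinv : (u⁻¹)^n * u^n = 1 := by rw [inv_pow]; exact inv_mul_cancel₀ hun
        linear_combination (-(u*(u⁻¹)^n)) * h8 + (u^(m-n)*u) * hinv
      have hw5 : -2 * (c * (starRingEnd ℂ) c) * u * (u⁻¹)^n * u^m =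
          2 * (-(c * (starRingEnd ℂ) c) * u^k) := by
        linear_combination (-2 * (c * (starRingEnd ℂ) c)) * hupow
      rw [habs2, hprod, Complex.add_conj, hw5, Complex.mul_conj, Complex.sq_norm]
      simp only [Complex.add_re, Complex.ofReal_re, Complex.mul_re, Complex.re_ofNat,
        Complex.im_ofNat, Complex.ofReal_im, Complex.neg_re, Complex.neg_im,
        mul_zero, zero_mul, sub_zero, neg_zero]
  obtain ⟨w, hw⟩ := key
  have hu1 : 0 < ‖u - 1‖ := by
    rw [norm_pos_iff]
    exact sub_ne_zero.mpr hu
  -- geometric sum bound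
  have hum : ∀ N : ℕ, ‖∑ m ∈ Finset.Icc n N, u^m‖ ≤ 2 / ‖u - 1‖ := by
    intro N
    rcases le_or_gt n N with h | h
    · rw [← Finset.Ico_add_one_right_eq_Icc, geom_sum_Ico hu (show n ≤ N + 1 by omega), norm_div]
      have h1 : ‖u ^ (N+1) - u ^ n‖ ≤ 2 := by
        calc ‖u ^ (N+1) - u ^ n‖
            ≤ ‖u^(N+1)‖ + ‖u^n‖ :=
              norm_sub_le _ _
          _ = 2 := by rw [norm_pow, huabs, norm_pow, huabs, one_pow, one_pow]; norm_num
      exact (div_le_div_iff_of_pos_right hu1).mpr h1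
    · rw [Finset.Icc_eq_empty (by omega), Finset.sum_empty, norm_zero]
      positivity
  set t : ℝ := 2 * (‖c‖)^2 with ht
  have h_t : 0 ≤ t := by positivity
  -- sum formula
  have hsum : ∀ N : ℕ, n ≤ N → ∑ m ∈ Finset.Icc n N, (‖Bp q s n m‖)^2
      = ((N:ℝ) + 1 - n) * t + (w * ∑ m ∈ Finset.Icc n N, u^m).re := by
    intro N hN
    rw [Finset.sum_congr rfl (fun m hm => hw m (Finset.mem_Icc.mp hm).1),
      Finset.sum_add_distrib, Finset.sum_const, Nat.card_Icc, nsmul_eq_mul,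
      ← Complex.re_sum, ← Finset.mul_sum]
    congr 1
    push_cast [Nat.cast_sub (show n ≤ N+1 by omega)]
    ring
  set C : ℝ := |1 - (n:ℝ)| * t + ‖w‖ * (2 / ‖u - 1‖) with hC
  have main : Tendsto (fun N : ℕ =>
      (1/(N:ℝ)) * ∑ m ∈ Finset.Icc n N, (‖Bp q s n m‖)^2 - t)
      atTop (nhds 0) := by
    apply squeeze_zero_norm' (a := fun N : ℕ => C / N)
    · filter_upwards [eventually_ge_atTop (max n 1)] with N hN
      have hn' : n ≤ N := le_trans (le_max_left _ _) hN
      have h1' : 1 ≤ N := le_trans (le_max_right _ _) hN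
      have hNpos : (0:ℝ) < N := by exact_mod_cast h1'
      rw [Real.norm_eq_abs, hsum N hn']
      have e : 1/(N:ℝ) * (((N:ℝ)+1-n)*t + (w * ∑ m ∈ Finset.Icc n N, u^m).re) - t
          = ((1-(n:ℝ))/N)*t + (1/N)*(w * ∑ m ∈ Finset.Icc n N, u^m).re := by
        field_simp
        ring
      rw [e]
      have p1 : |((1-(n:ℝ))/(N:ℝ))*t| = (|1-(n:ℝ)|/N)*t := by
        rw [_root_.abs_mul, _root_.abs_div, _root_.abs_of_nonneg h_t, _root_.abs_of_pos hNpos]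
      have p2 : |(1/(N:ℝ))*(w * ∑ m ∈ Finset.Icc n N, u^m).re|
          ≤ (1/N)*(‖w‖ * (2/‖u-1‖)) := by
        rw [_root_.abs_mul, _root_.abs_of_pos (by positivity : (0:ℝ) < 1/(N:ℝ))]
        apply mul_le_mul_of_nonneg_left _ (by positivity : (0:ℝ) ≤ 1/(N:ℝ))
        calc |(w * ∑ m ∈ Finset.Icc n N, u^m).re|
            ≤ ‖w * ∑ m ∈ Finset.Icc n N, u^m‖ := Complex.abs_re_le_norm _
          _ = ‖w‖ * ‖∑ m ∈ Finset.Icc n N, u^m‖ := norm_mul _ _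
          _ ≤ ‖w‖ * (2/‖u-1‖) :=
              mul_le_mul_of_nonneg_left (hum N) (norm_nonneg _)
      calc |((1-(n:ℝ))/N)*t + (1/N)*(w * ∑ m ∈ Finset.Icc n N, u^m).re|
          ≤ |((1-(n:ℝ))/N)*t| + |(1/N)*(w * ∑ m ∈ Finset.Icc n N, u^m).re| := abs_add_le _ _
        _ ≤ (|1-(n:ℝ)|/N)*t + (1/N)*(‖w‖ * (2/‖u-1‖)) := by
            rw [p1]
            linarith [p2]
        _ = C / N := by
            rw [hC]
            field_simp
    · exact tendsto_const_div_atTop_nhds_zero_nat C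
  have final := main.add (tendsto_const_nhds (x := t))
  simp only [sub_add_cancel, zero_add] at final
  exact final


end HomTree
end
end
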